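/- arXiv:1506.03919 — 3 statements merged into one kernel-verified Lean document; each statement's English description precedes it below -/
import Mathlib

section
/- Let σ be a density matrix on ℂ^n, let σ_c = diag(σ), and let ρ be any positive definite diagonal density matrix. Then the Pythagorean relation D(σ||ρ) = D(σ||σ_c) + D(σ_c||ρ) holds, where D is the quantum relative entropy. -/
open scoped ComplexOrder
open Matrix

/-- The diagonal part of a matrix in the standard basis. -/
def diagPart {n : ℕ} (B : Matrix (Fin n) (Fin n) ℂ) : Matrix (Fin n) (Fin n) ℂ :=
  Matrix.diagonal (fun j => B j j)

/-- Logarithm of a matrix via the spectral decomposition (0 for non-Hermitian input);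
    since `Real.log 0 = 0` this incorporates the convention `0 * ln 0 = 0`. -/
noncomputable def matLog {n : ℕ} (A : Matrix (Fin n) (Fin n) ℂ) : Matrix (Fin n) (Fin n) ℂ :=
  if h : A.IsHermitian then
    (h.eigenvectorUnitary : Matrix (Fin n) (Fin n) ℂ)
      * Matrix.diagonal (fun i => (Real.log (h.eigenvalues i) : ℂ))
      * star (h.eigenvectorUnitary : Matrix (Fin n) (Fin n) ℂ)
  else 0

/-- Quantum relative entropy `D(σ‖ρ) = Tr σ ln σ - Tr σ ln ρ`. -/
noncomputable def relEnt {n : ℕ} (σ ρ : Matrix (Fin n) (Fin n) ℂ) : ℝ :=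
  ((σ * matLog σ).trace - (σ * matLog ρ).trace).re

/-- If `U Λ U* = diag d` with `Λ` diagonal and `U` unitary, then
`U f(Λ) U* = diag (f ∘ d)` for any function `f`. -/
lemma conj_diagonal_of_conj_diagonal {n : ℕ} (U : Matrix (Fin n) (Fin n) ℂ)
    (hU : U ∈ unitary (Matrix (Fin n) (Fin n) ℂ)) (lam d : Fin n → ℂ)
    (h : U * Matrix.diagonal lam * star U = Matrix.diagonal d) (f : ℂ → ℂ) :
    U * Matrix.diagonal (fun i => f (lam i)) * star U
      = Matrix.diagonal (fun j => f (d j)) := by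
  have hcol : ∀ j i, d j * U j i = U j i * lam i := by
    have h2 : Matrix.diagonal d * U = U * Matrix.diagonal lam := by
      rw [← h, mul_assoc, mul_assoc, Unitary.star_mul_self_of_mem hU, mul_one]
    intro j i
    have := congrFun (congrFun h2 j) i
    simpa [Matrix.diagonal_mul, Matrix.mul_diagonal] using this
  ext j k
  have hUU : U * star U = 1 := Unitary.mul_star_self_of_mem hU
  have hUUjk := congrFun (congrFun hUU j) k
  rw [Matrix.mul_apply] at hUUjk
  rw [Matrix.mul_apply]
  have hterm : ∀ i, (U * Matrix.diagonal (fun i => f (lam i))) j i * star U i k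
      = f (d j) * (U j i * star U i k) := by
    intro i
    rw [Matrix.mul_diagonal]
    by_cases hz : U j i = 0
    · simp [hz]
    · have h4 : lam i = d j := by
        have h3 := hcol j i
        rw [mul_comm (U j i) (lam i)] at h3
        exact (mul_right_cancel₀ hz h3).symm
      rw [h4]; ring
  rw [Finset.sum_congr rfl fun i _ => hterm i, ← Finset.mul_sum, hUUjk]
  by_cases hjk : j = k <;> simp [hjk, Matrix.one_apply, Matrix.diagonal_apply]

/-- `matLog` of a diagonal matrix is diagonal. -/
lemma matLog_diagonal {n : ℕ} (v : Fin n → ℂ) (hH : (Matrix.diagonal v).IsHermitian) :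
    matLog (Matrix.diagonal v)
      = Matrix.diagonal (fun j => (Real.log (v j).re : ℂ)) := by
  rw [matLog, dif_pos hH]
  have hspec := hH.spectral_theorem
  have key := conj_diagonal_of_conj_diagonal
    (hH.eigenvectorUnitary : Matrix (Fin n) (Fin n) ℂ) hH.eigenvectorUnitary.2
    (fun i => (hH.eigenvalues i : ℂ)) v (by
      simpa [Function.comp_def] using hspec.symm) (fun z => (Real.log z.re : ℂ))
  simpa using key

lemma trace_mul_diagonal_eq {n : ℕ} (σ : Matrix (Fin n) (Fin n) ℂ) (c : Fin n → ℂ) :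
    (σ * Matrix.diagonal c).trace = (diagPart σ * Matrix.diagonal c).trace := by
  simp [Matrix.trace, Matrix.mul_diagonal, diagPart, Matrix.diagonal_apply_eq]

theorem pythagorean_relation {n : ℕ} (σ ρ : Matrix (Fin n) (Fin n) ℂ)
    (hσ : σ.PosSemidef) (hσ1 : σ.trace = 1)
    (hσc : (diagPart σ).PosDef)
    (hρ : ρ.PosDef) (hρ1 : ρ.trace = 1) (hρdiag : ∀ j k, j ≠ k → ρ j k = 0) :
    relEnt σ ρ = relEnt σ (diagPart σ) + relEnt (diagPart σ) ρ := by
  -- ρ is diagonal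
  have hρeq : ρ = Matrix.diagonal (fun j => ρ j j) := by
    ext j k
    by_cases hjk : j = k
    · subst hjk; simp
    · simp [Matrix.diagonal_apply_ne _ hjk, hρdiag j k hjk]
  have hlogρ : matLog ρ = Matrix.diagonal (fun j => (Real.log (ρ j j).re : ℂ)) := by
    conv_lhs => rw [hρeq]
    exact matLog_diagonal _ (by rw [← hρeq]; exact hρ.isHermitian)
  have hlogσc : matLog (diagPart σ)
      = Matrix.diagonal (fun j => (Real.log (σ j j).re : ℂ)) :=
    matLog_diagonal _ hσc.isHermitian
  have h1 : (σ * matLog ρ).trace = (diagPart σ * matLog ρ).trace := by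
    rw [hlogρ]; exact trace_mul_diagonal_eq σ _
  have h2 : (σ * matLog (diagPart σ)).trace
      = (diagPart σ * matLog (diagPart σ)).trace := by
    rw [hlogσc]; exact trace_mul_diagonal_eq σ _
  unfold relEnt
  rw [h1, h2]
  simp only [Complex.sub_re, Complex.add_re]
  ring
end

section
/- If σ is a density matrix on ℂ^n with σ_c = diag(σ) positive definite, then among all positive definite diagonal density matrices ρ, the divergence D(σ||ρ) is minimized uniquely at ρ = σ_c. -/
open scoped ComplexOrder
open Matrix

/-!
For a diagonal `ρ = diag(q)` the logarithm is `diag(log q)`, so `Tr σ ln ρ = ∑ pⱼ log qⱼ` with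
`pⱼ = σⱼⱼ`, and `D(σ‖ρ) - D(σ‖σ_c) = ∑ pⱼ (log pⱼ - log qⱼ)` is the classical Kullback–Leibler
divergence of the probability vectors `p` and `q`. Termwise, `log x ≤ x - 1` with equality only at
`x = 1` (Gibbs' inequality) makes it positive unless `q = p`.
-/

lemma matLog_diagonal_ofReal {n : ℕ} (d : Fin n → ℝ) :
    matLog (diagonal (fun j => (d j : ℂ))) = diagonal (fun j => (Real.log (d j) : ℂ)) := by
  have hA : (diagonal (fun j => (d j : ℂ))).IsHermitian := by
    simp [IsHermitian, diagonal_conjTranspose, Pi.star_def]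
  set U : Matrix (Fin n) (Fin n) ℂ := ↑hA.eigenvectorUnitary
  have heig : ∀ j k, (d j : ℂ) * U j k = hA.eigenvalues k * U j k := fun j k => by
    simpa [U, mulVec_diagonal] using congrFun (hA.mulVec_eigenvectorBasis k) j
  have hlog : ∀ j k, (Real.log (d j) : ℂ) * U j k = Real.log (hA.eigenvalues k) * U j k := by
    intro j k
    rcases eq_or_ne (U j k) 0 with h | h
    · simp [h]
    · have : d j = hA.eigenvalues k := by exact_mod_cast mul_right_cancel₀ h (heig j k)
      rw [this]
  have hcomm : diagonal (fun j => (Real.log (d j) : ℂ)) * U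
      = U * diagonal (fun k => (Real.log (hA.eigenvalues k) : ℂ)) := by
    ext j k
    rw [diagonal_mul, mul_diagonal, hlog, mul_comm]
  rw [matLog, dif_pos hA, ← hcomm, mul_assoc,
    Unitary.mul_star_self_of_mem hA.eigenvectorUnitary.2, mul_one]

lemma re_trace_mul_diagonal_ofReal {m : Type*} [Fintype m] [DecidableEq m]
    (A : Matrix m m ℂ) (c : m → ℝ) :
    (A * diagonal (fun j => (c j : ℂ))).trace.re = ∑ j, (A j j).re * c j := by
  simp [trace, mul_diagonal, Complex.re_sum]

lemma relEnt_diagonal_ofReal {n : ℕ} (σ : Matrix (Fin n) (Fin n) ℂ) (c : Fin n → ℝ) :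
    relEnt σ (diagonal (fun j => (c j : ℂ)))
      = (σ * matLog σ).trace.re - ∑ j, (σ j j).re * Real.log (c j) := by
  rw [relEnt, Complex.sub_re, matLog_diagonal_ofReal, re_trace_mul_diagonal_ofReal]

lemma Matrix.IsHermitian.eq_diagonal_re_of_offDiag_eq_zero {m 𝕜 : Type*} [DecidableEq m]
    [RCLike 𝕜] {A : Matrix m m 𝕜} (hA : A.IsHermitian) (hdiag : ∀ j k, j ≠ k → A j k = 0) :
    A = diagonal (fun j => (RCLike.re (A j j) : 𝕜)) := by
  ext j k
  rcases eq_or_ne j k with rfl | hjk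
  · rw [diagonal_apply_eq, hA.coe_re_apply_self]
  · rw [diagonal_apply_ne _ hjk, hdiag j k hjk]

lemma Matrix.PosDef.re_diag_pos {m 𝕜 : Type*} [Fintype m] [RCLike 𝕜]
    {A : Matrix m m 𝕜} (hA : A.PosDef) (j : m) : 0 < RCLike.re (A j j) :=
  (RCLike.pos_iff.mp hA.diag_pos).1

namespace Real

lemma mul_log_sub_log_le_sub {p q : ℝ} (hp : 0 < p) (hq : 0 < q) :
    p * (log q - log p) ≤ q - p :=
  calc p * (log q - log p) = p * log (q / p) := by rw [log_div hq.ne' hp.ne']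
    _ ≤ p * (q / p - 1) := by gcongr; exact log_le_sub_one_of_pos (div_pos hq hp)
    _ = q - p := by field_simp

lemma mul_log_sub_log_lt_sub {p q : ℝ} (hp : 0 < p) (hq : 0 < q) (hpq : q ≠ p) :
    p * (log q - log p) < q - p :=
  calc p * (log q - log p) = p * log (q / p) := by rw [log_div hq.ne' hp.ne']
    _ < p * (q / p - 1) := by
      gcongr
      exact log_lt_sub_one_of_pos (div_pos hq hp) (by rwa [ne_eq, div_eq_one_iff_eq hp.ne'])
    _ = q - p := by field_simp

lemma sum_mul_log_lt_sum_mul_log {ι : Type*} [Fintype ι] {p q : ι → ℝ}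
    (hp : ∀ i, 0 < p i) (hq : ∀ i, 0 < q i) (hsum : ∑ i, q i ≤ ∑ i, p i) (hpq : q ≠ p) :
    ∑ i, p i * log (q i) < ∑ i, p i * log (p i) := by
  obtain ⟨i, hi⟩ := Function.ne_iff.mp hpq
  have h : ∑ i, p i * (log (q i) - log (p i)) < ∑ i, (q i - p i) :=
    Finset.sum_lt_sum (fun j _ => mul_log_sub_log_le_sub (hp j) (hq j))
      ⟨i, Finset.mem_univ i, mul_log_sub_log_lt_sub (hp i) (hq i) hi⟩
  simp only [mul_sub, Finset.sum_sub_distrib] at h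
  linarith

end Real

theorem diag_minimizes_relEnt_general {n : ℕ} (σ : Matrix (Fin n) (Fin n) ℂ)
    (hσ1 : σ.trace = 1)
    (hσc : (diagPart σ).PosDef) :
    ∀ ρ : Matrix (Fin n) (Fin n) ℂ, ρ.PosDef → ρ.trace = 1 →
      (∀ j k, j ≠ k → ρ j k = 0) →
      relEnt σ (diagPart σ) ≤ relEnt σ ρ ∧
        (relEnt σ ρ = relEnt σ (diagPart σ) → ρ = diagPart σ) := by
  intro ρ hρ hρ1 hρdiag
  set p : Fin n → ℝ := fun j => (σ j j).re
  set q : Fin n → ℝ := fun j => (ρ j j).re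
  have hσc_eq : diagPart σ = diagonal (fun j => (p j : ℂ)) := by
    simpa [diagPart] using
      hσc.isHermitian.eq_diagonal_re_of_offDiag_eq_zero fun j k h => diagonal_apply_ne _ h
  have hρ_eq : ρ = diagonal (fun j => (q j : ℂ)) :=
    hρ.isHermitian.eq_diagonal_re_of_offDiag_eq_zero hρdiag
  have hp : ∀ j, 0 < p j := by simpa [diagPart] using hσc.re_diag_pos
  have hq : ∀ j, 0 < q j := hρ.re_diag_pos
  have hsum : ∑ j, q j = ∑ j, p j := by
    simpa [trace, Complex.re_sum] using congrArg Complex.re (hρ1.trans hσ1.symm)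
  rw [hσc_eq, hρ_eq, relEnt_diagonal_ofReal, relEnt_diagonal_ofReal]
  rcases eq_or_ne q p with hqp | hqp
  · simp [hqp]
  · have hgibbs := Real.sum_mul_log_lt_sum_mul_log hp hq hsum.le hqp
    exact ⟨by linarith, fun h => by linarith⟩

theorem diag_minimizes_relEnt {n : ℕ} (σ : Matrix (Fin n) (Fin n) ℂ)
    (hσ : σ.PosSemidef) (hσ1 : σ.trace = 1)
    (hσc : (diagPart σ).PosDef) :
    ∀ ρ : Matrix (Fin n) (Fin n) ℂ, ρ.PosDef → ρ.trace = 1 →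
      (∀ j k, j ≠ k → ρ j k = 0) →
      relEnt σ (diagPart σ) ≤ relEnt σ ρ ∧
        (relEnt σ ρ = relEnt σ (diagPart σ) → ρ = diagPart σ) :=
  diag_minimizes_relEnt_general σ hσ1 hσc
end

section
/- Let σ be a density matrix and ρ a positive definite diagonal density matrix on ℂ^n, both with diag(σ) positive definite. Then D(σ||ρ) - D(diag(σ)||ρ) = D(σ||diag(σ)), a quantity independent of ρ; hence minimizing ρ ↦ D(σ||ρ) over diagonal density matrices is equivalent to minimizing ρ ↦ D(diag(σ)||ρ). -/
open scoped ComplexOrder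
open Matrix

/-! `ln ρ` and `ln diag(σ)` are functions of diagonal matrices, so they commute with every
diagonal matrix and are therefore diagonal themselves. Tracing `σ` against a diagonal matrix only
sees `diag(σ)`, so `Tr σ ln ρ = Tr diag(σ) ln ρ` and `Tr σ ln diag(σ) = Tr diag(σ) ln diag(σ)`;
the identity is then a rearrangement of the four traces. -/

lemma matLog_eq_cfc {n : ℕ} {A : Matrix (Fin n) (Fin n) ℂ} (hA : A.IsHermitian) :
    matLog A = cfc Real.log A := by
  rw [matLog, dif_pos hA, hA.cfc_eq, IsHermitian.cfc, Unitary.conjStarAlgAut_apply]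
  rfl

lemma Commute.matLog_left {n : ℕ} {A B : Matrix (Fin n) (Fin n) ℂ} (h : Commute A B) :
    Commute (matLog A) B := by
  by_cases hA : A.IsHermitian
  · rw [matLog_eq_cfc hA]
    exact h.cfc_real Real.log
  · rw [matLog, dif_neg hA]
    exact Commute.zero_left B

lemma isDiag_of_forall_commute_diagonal {ι α : Type*} [Fintype ι] [DecidableEq ι] [Semiring α]
    {M : Matrix ι ι α} (h : ∀ d : ι → α, Commute M (diagonal d)) : M.IsDiag := by
  intro i j hij
  have := congrFun₂ (h (Pi.single j 1)).eq i j
  simpa [Pi.single_apply, hij] using this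

lemma Matrix.IsDiag.matLog {n : ℕ} {A : Matrix (Fin n) (Fin n) ℂ} (hA : A.IsDiag) :
    (matLog A).IsDiag :=
  isDiag_of_forall_commute_diagonal fun d =>
    Commute.matLog_left (hA.diagonal_diag ▸ commute_diagonal _ d)

lemma trace_mul_of_isDiag {n : ℕ} (A : Matrix (Fin n) (Fin n) ℂ) {B : Matrix (Fin n) (Fin n) ℂ}
    (hB : B.IsDiag) : (A * B).trace = (diagPart A * B).trace := by
  rw [← hB.diagonal_diag]
  simp [trace, diagPart]

theorem relEnt_diff_independent_of_rho_general {n : ℕ} (σ ρ : Matrix (Fin n) (Fin n) ℂ)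
    (hρdiag : ∀ j k, j ≠ k → ρ j k = 0) :
    relEnt σ ρ - relEnt (diagPart σ) ρ = relEnt σ (diagPart σ) := by
  have hρ : ρ.IsDiag := hρdiag
  have hσd : (diagPart σ).IsDiag := isDiag_diagonal _
  simp only [relEnt, trace_mul_of_isDiag σ hρ.matLog, trace_mul_of_isDiag σ hσd.matLog,
    Complex.sub_re]
  ring

theorem relEnt_diff_independent_of_rho {n : ℕ} (σ ρ : Matrix (Fin n) (Fin n) ℂ)
    (hσ : σ.PosSemidef) (hσ1 : σ.trace = 1)
    (hσc : (diagPart σ).PosDef)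
    (hρ : ρ.PosDef) (hρ1 : ρ.trace = 1) (hρdiag : ∀ j k, j ≠ k → ρ j k = 0) :
    relEnt σ ρ - relEnt (diagPart σ) ρ = relEnt σ (diagPart σ) :=
  relEnt_diff_independent_of_rho_general σ ρ hρdiag
end
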